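/- For a 𝒯-category X=(X,a) the following are equivalent: (i) X is injective (with respect to fully faithful 𝒯-functors); (ii) the Yoneda functor y_X: X → X̂ has a left inverse, i.e. a 𝒯-functor Sup_X: X̂ → X with Sup_X · y_X ≅ 1_X; (iii) y_X: X → X̂ has a left adjoint; (iv) X is cocomplete. -/

import Mathlib

/-!
(i) ⇒ (ii): extend `1_X` along the Yoneda embedding, which is fully faithful by the Yoneda lemma.
(ii) ⇒ (iii): by the Yoneda lemma, `Sup_X · y_X ≅ 1_X` already gives the unit `1 ≤ y_X · Sup_X`.
(iii) ⇒ (iv): `Sup_X ⊣ y_X` forces `(Sup_X)_* = y_X^*`, so the `ψ`-weighted colimit of `h` is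
`z ↦ Sup_X (ψ(-,z) ∘ h^*)`: the `X̂`-distance from `ψ(-,z) ∘ h^*` to `a(-,x)` is `(h_* ⟜ ψ)(z,x)`.
(iv) ⇒ (i): for `f : A → X` and fully faithful `i : A → B`, the colimit of `f` weighted by `i_*`
extends `f` along `i`, since full faithfulness gives `(f_* ⟜ i_*) · T i = f_*`.
-/


universe u

namespace Paper

/-- A strict topological theory `𝒯 = (𝕋, V, ξ)`: a commutative unital quantale `V`
(a complete lattice with a commutative monoid structure whose multiplication preserves
suprema in each variable, with `⊥ < k`), a `Set`-monad `𝕋 = (T, e, m)` such that `T`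
sends pullbacks to weak pullbacks and the naturality squares of `m` are weak pullbacks,
and a `𝕋`-algebra structure `ξ : T V → V` for which `⊗` and `k` are `𝕋`-algebra
homomorphisms and `ξ_X := ξ ∘ T(-)` is a (monotone) natural transformation
`P_V → P_V T`. -/
structure TopTheory (V : Type u) [CompleteLattice V] (T : Type u → Type u) where
  tens : V → V → V
  unit : V
  tens_comm : ∀ u v : V, tens u v = tens v u
  tens_assoc : ∀ u v w : V, tens (tens u v) w = tens u (tens v w)
  unit_tens : ∀ v : V, tens unit v = v
  tens_sSup : ∀ (u : V) (S : Set V), tens u (sSup S) = ⨆ v ∈ S, tens u v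
  bot_lt_unit : (⊥ : V) < unit
  map : ∀ {X Y : Type u}, (X → Y) → T X → T Y
  map_id : ∀ {X : Type u}, map (id : X → X) = id
  map_comp : ∀ {X Y Z : Type u} (g : Y → Z) (f : X → Y) (𝔵 : T X),
    map (g ∘ f) 𝔵 = map g (map f 𝔵)
  e : ∀ {X : Type u}, X → T X
  m : ∀ {X : Type u}, T (T X) → T X
  e_nat : ∀ {X Y : Type u} (f : X → Y) (x : X), map f (e x) = e (f x)
  m_nat : ∀ {X Y : Type u} (f : X → Y) (𝔛 : T (T X)), map f (m 𝔛) = m (map (map f) 𝔛)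
  m_e : ∀ {X : Type u} (𝔵 : T X), m (e 𝔵) = 𝔵
  m_map_e : ∀ {X : Type u} (𝔵 : T X), m (map e 𝔵) = 𝔵
  m_assoc : ∀ {X : Type u} (𝔜 : T (T (T X))), m (m 𝔜) = m (map m 𝔜)
  /-- (BC): `T` sends pullbacks to weak pullbacks. -/
  map_bc : ∀ {X Y Z : Type u} (f : X → Z) (g : Y → Z) (𝔵 : T X) (𝔶 : T Y),
    map f 𝔵 = map g 𝔶 →
    ∃ 𝔴 : T {p : X × Y // f p.1 = g p.2},
      map (fun p => p.1.1) 𝔴 = 𝔵 ∧ map (fun p => p.1.2) 𝔴 = 𝔶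
  /-- (BC): every naturality square of `m` is a weak pullback. -/
  m_bc : ∀ {X Y : Type u} (f : X → Y) (𝔜 : T (T Y)) (𝔵 : T X),
    m 𝔜 = map f 𝔵 → ∃ 𝔛 : T (T X), map (map f) 𝔛 = 𝔜 ∧ m 𝔛 = 𝔵
  xi : T V → V
  xi_e : ∀ v : V, xi (e v) = v
  xi_m : ∀ 𝔙 : T (T V), xi (m 𝔙) = xi (map xi 𝔙)
  /-- `k : 1 → V` is a `𝕋`-algebra homomorphism. -/
  xi_unit : ∀ {X : Type u} (𝔵 : T X), xi (map (fun _ => unit) 𝔵) = unit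
  /-- `⊗ : V × V → V` is a `𝕋`-algebra homomorphism. -/
  xi_tens : ∀ 𝔴 : T (V × V),
    xi (map (fun p => tens p.1 p.2) 𝔴) = tens (xi (map Prod.fst 𝔴)) (xi (map Prod.snd 𝔴))
  /-- each component `ξ_X : V^X → V^{T X}` is monotone. -/
  xi_mono : ∀ {X : Type u} (φ φ' : X → V), (∀ x, φ x ≤ φ' x) →
    ∀ 𝔵 : T X, xi (map φ 𝔵) ≤ xi (map φ' 𝔵)
  /-- `ξ_X` is a natural transformation `P_V → P_V T`. -/
  xi_nat : ∀ {X Y : Type u} (f : X → Y) (φ : X → V) (𝔶 : T Y),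
    (⨆ 𝔵 : {𝔵 : T X // map f 𝔵 = 𝔶}, xi (map φ 𝔵.1)) =
      xi (map (fun y => ⨆ x : {x : X // f x = y}, φ x.1) 𝔶)

namespace TopTheory

variable {V : Type u} [CompleteLattice V] {T : Type u → Type u}

/-- The internal hom of the quantale: `u ⊗ (-) ⊣ hom (u, -)`. -/
def ihom (𝒯 : TopTheory V T) (u w : V) : V := sSup {z | 𝒯.tens u z ≤ w}

/-- The extension `T_ξ` of `T : Set → Set` to `V`-relations. -/
def Txi (𝒯 : TopTheory V T) {X Y : Type u} (r : X → Y → V) (𝔵 : T X) (𝔶 : T Y) : V :=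
  ⨆ 𝔴 : {w : T (X × Y) // 𝒯.map Prod.fst w = 𝔵 ∧ 𝒯.map Prod.snd w = 𝔶},
    𝒯.xi (𝒯.map (fun p => r p.1 p.2) 𝔴.1)

/-- Kleisli convolution `β ∘ α = β · T_ξ α · m_X°` of `𝒯`-relations
`α : X ⇸ Y` and `β : Y ⇸ Z`. -/
def kleisli (𝒯 : TopTheory V T) {X Y Z : Type u}
    (β : T Y → Z → V) (α : T X → Y → V) (𝔵 : T X) (z : Z) : V :=
  ⨆ 𝔛 : {𝔛 : T (T X) // 𝒯.m 𝔛 = 𝔵}, ⨆ 𝔶 : T Y, 𝒯.tens (𝒯.Txi α 𝔛.1 𝔶) (β 𝔶 z)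

/-- The `𝒯`-relation `e_X° : X ⇸ X`. -/
def unitRel (𝒯 : TopTheory V T) (X : Type u) (𝔵 : T X) (x : X) : V :=
  ⨆ _ : 𝔵 = 𝒯.e x, 𝒯.unit

/-- A `𝒯`-category structure on `X`: a `𝒯`-relation `a : X ⇸ X` with
`e_X° ≤ a` and `a ∘ a ≤ a`. -/
structure TCatStr (𝒯 : TopTheory V T) (X : Type u) where
  rel : T X → X → V
  le_refl : ∀ x : X, 𝒯.unit ≤ rel (𝒯.e x) x
  comp : ∀ (𝔵 : T X) (x : X), 𝒯.kleisli rel rel 𝔵 x ≤ rel 𝔵 x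

/-- The `𝒯`-module conditions `φ ∘ a ≤ φ` and `b ∘ φ ≤ φ` for a `𝒯`-relation
`φ : X ⇸ Y` between (structures underlying) `𝒯`-categories `(X,a)` and `(Y,b)`. -/
def IsTModRel (𝒯 : TopTheory V T) {X Y : Type u}
    (a : T X → X → V) (b : T Y → Y → V) (φ : T X → Y → V) : Prop :=
  (∀ 𝔵 y, 𝒯.kleisli φ a 𝔵 y ≤ φ 𝔵 y) ∧ (∀ 𝔵 y, 𝒯.kleisli b φ 𝔵 y ≤ φ 𝔵 y)

variable {𝒯 : TopTheory V T}

/-- `f_* = b · T f`. -/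
def modStar {X Y : Type u} (b : 𝒯.TCatStr Y) (f : X → Y) (𝔵 : T X) (y : Y) : V :=
  b.rel (𝒯.map f 𝔵) y

/-- `f^* = f° · b`. -/
def modCostar {X Y : Type u} (b : 𝒯.TCatStr Y) (f : X → Y) (𝔶 : T Y) (x : X) : V :=
  b.rel 𝔶 (f x)

/-- The extension `φ ⟜ ψ` of `φ : X ⇸∘ Y` along `ψ : X ⇸∘ Z`, given by
`(φ ⟜ ψ)(𝔷,y) = ⋀_{𝔵 ∈ T X} hom((T_ξ ψ · m_X°)(𝔵,𝔷), φ(𝔵,y))`. -/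
def extend (𝒯 : TopTheory V T) {X Y Z : Type u}
    (φ : T X → Y → V) (ψ : T X → Z → V) (𝔷 : T Z) (y : Y) : V :=
  ⨅ 𝔵 : T X, 𝒯.ihom (⨆ 𝔛 : {𝔛 : T (T X) // 𝒯.m 𝔛 = 𝔵}, 𝒯.Txi ψ 𝔛.1 𝔷) (φ 𝔵 y)

/-- A `𝒯`-functor `f : (X,a) → (Y,b)`. -/
def IsTFunctor {X Y : Type u} (a : 𝒯.TCatStr X) (b : 𝒯.TCatStr Y) (f : X → Y) : Prop :=
  ∀ (𝔵 : T X) (x : X), a.rel 𝔵 x ≤ b.rel (𝒯.map f 𝔵) (f x)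

/-- A fully faithful `𝒯`-functor. -/
def FullyFaithful {X Y : Type u} (a : 𝒯.TCatStr X) (b : 𝒯.TCatStr Y) (f : X → Y) : Prop :=
  ∀ (𝔵 : T X) (x : X), a.rel 𝔵 x = b.rel (𝒯.map f 𝔵) (f x)

/-- The order `f ≤ g ⟺ f^* ≤ g^*` on `𝒯`-functors `X → (Y,b)`. -/
def funLE {X Y : Type u} (b : 𝒯.TCatStr Y) (f g : X → Y) : Prop :=
  ∀ (𝔶 : T Y) (x : X), b.rel 𝔶 (f x) ≤ b.rel 𝔶 (g x)

/-- Equivalence `f ≅ g ⟺ f^* = g^*` of `𝒯`-functors `X → (Y,b)`. -/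
def FunEquiv {X Y : Type u} (b : 𝒯.TCatStr Y) (f g : X → Y) : Prop :=
  ∀ (𝔶 : T Y) (x : X), b.rel 𝔶 (f x) = b.rel 𝔶 (g x)

/-- `f ⊣ g`:  `1_X ≤ g·f` and `f·g ≤ 1_Y`. -/
def IsAdjunction {X Y : Type u} (a : 𝒯.TCatStr X) (b : 𝒯.TCatStr Y)
    (f : X → Y) (g : Y → X) : Prop :=
  (∀ (𝔵 : T X) (x : X), a.rel 𝔵 x ≤ a.rel 𝔵 (g (f x))) ∧
    (∀ (𝔶 : T Y) (y : Y), b.rel 𝔶 (f (g y)) ≤ b.rel 𝔶 y)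

/-- A left adjoint `𝒯`-functor. -/
def IsLeftAdjoint {X Y : Type u} (a : 𝒯.TCatStr X) (b : 𝒯.TCatStr Y) (f : X → Y) : Prop :=
  IsTFunctor a b f ∧ ∃ g : Y → X, IsTFunctor b a g ∧ IsAdjunction a b f g

/-- L-separatedness: equivalent `𝒯`-functors into `X` are equal. -/
def Separated {X : Type u} (a : 𝒯.TCatStr X) : Prop :=
  ∀ (A : Type u) (as : 𝒯.TCatStr A) (f g : A → X),
    IsTFunctor as a f → IsTFunctor as a g → FunEquiv a f g → f = g

/-- Injectivity with respect to fully faithful `𝒯`-functors. -/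
def Injective {X : Type u} (a : 𝒯.TCatStr X) : Prop :=
  ∀ (A B : Type u) (as : 𝒯.TCatStr A) (bs : 𝒯.TCatStr B) (f : A → X) (i : A → B),
    IsTFunctor as a f → IsTFunctor as bs i → FullyFaithful as bs i →
      ∃ g : B → X, IsTFunctor bs a g ∧ FunEquiv a (g ∘ i) f

/-- `g : Z → X` is the `ψ`-weighted colimit of `h : A → X`, i.e. `g_* = h_* ⟜ ψ`. -/
def IsColimit {X A Z : Type u} (a : 𝒯.TCatStr X) (h : A → X) (ψ : T A → Z → V)
    (g : Z → X) : Prop :=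
  ∀ (𝔷 : T Z) (x : X), modStar a g 𝔷 x = 𝒯.extend (modStar a h) ψ 𝔷 x

/-- Cocompleteness: every weighted diagram has a colimit. -/
def Cocomplete {X : Type u} (a : 𝒯.TCatStr X) : Prop :=
  ∀ (A Z : Type u) (as : 𝒯.TCatStr A) (cs : 𝒯.TCatStr Z) (h : A → X),
    IsTFunctor as a h → ∀ ψ : T A → Z → V, 𝒯.IsTModRel as.rel cs.rel ψ →
      ∃ g : Z → X, IsTFunctor cs a g ∧ IsColimit a h ψ g

/-- Cocontinuity: preservation of all weighted colimits. -/
def Cocontinuous {X Y : Type u} (a : 𝒯.TCatStr X) (b : 𝒯.TCatStr Y) (f : X → Y) : Prop :=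
  ∀ (A Z : Type u) (as : 𝒯.TCatStr A) (cs : 𝒯.TCatStr Z) (h : A → X)
    (ψ : T A → Z → V) (g : Z → X),
    IsTFunctor as a h → 𝒯.IsTModRel as.rel cs.rel ψ → IsTFunctor cs a g →
      IsColimit a h ψ g → IsColimit b (f ∘ h) ψ (f ∘ g)

/-- A presheaf on `(X,a)`: a `𝒯`-module `X ⇸∘ G`, where `G = (1, e_1°)`. -/
def IsPresheaf {X : Type u} (a : 𝒯.TCatStr X) (ψ : T X → V) : Prop :=
  𝒯.IsTModRel a.rel (𝒯.unitRel PUnit) (fun 𝔵 _ => ψ 𝔵)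

/-- The underlying set of the presheaf `𝒯`-category `X̂`. -/
def Hat {X : Type u} (a : 𝒯.TCatStr X) : Type u := {ψ : T X → V // IsPresheaf a ψ}

/-- The `𝒯`-category structure `⟦-,-⟧` of `V^{|X|}`. -/
def powRel (𝒯 : TopTheory V T) (X : Type u) (𝔭 : T (T X → V)) (ψ : T X → V) : V :=
  ⨅ 𝔮 : {q : T ((T X) × (T X → V)) // 𝒯.map Prod.snd q = 𝔭},
    𝒯.ihom (𝒯.xi (𝒯.map (fun p => p.2 p.1) 𝔮.1)) (ψ (𝒯.m (𝒯.map Prod.fst 𝔮.1)))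

/-- `hs` is the `𝒯`-category structure on `X̂` inherited from `V^{|X|}`. -/
def IsHatStr {X : Type u} (a : 𝒯.TCatStr X) (hs : 𝒯.TCatStr (Hat a)) : Prop :=
  ∀ (𝔭 : T (Hat a)) (ψ : Hat a), hs.rel 𝔭 ψ = 𝒯.powRel X (𝒯.map Subtype.val 𝔭) ψ.1

/-- `y` is the Yoneda functor `X → X̂`, `y x = a(-,x)`. -/
def IsYoneda {X : Type u} (a : 𝒯.TCatStr X) (y : X → Hat a) : Prop :=
  ∀ (x : X) (𝔵 : T X), (y x).1 𝔵 = a.rel 𝔵 x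

/-- The underlying map `ψ ↦ ψ ∘ f^*` of `f̂ : X̂ → Ŷ`. -/
def hatMapRel {X Y : Type u} (b : 𝒯.TCatStr Y) (f : X → Y) (ψ : T X → V) (𝔶 : T Y) : V :=
  𝒯.kleisli (fun 𝔵 (_ : PUnit.{u + 1}) => ψ 𝔵) (modCostar b f) 𝔶 PUnit.unit

/-- `fh` is the `𝒯`-functor `f̂ : X̂ → Ŷ`, with underlying map `ψ ↦ ψ ∘ f^*`. -/
def IsHatMap {X Y : Type u} (a : 𝒯.TCatStr X) (b : 𝒯.TCatStr Y) (f : X → Y)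
    (fh : Hat a → Hat b) : Prop :=
  ∀ (ψ : Hat a) (𝔶 : T Y), (fh ψ).1 𝔶 = hatMapRel b f ψ.1 𝔶

/-- An inhabited `𝒯`-module: `k ≤ ⋀_y ⋁_𝔵 φ(𝔵,y)`. -/
def InhabitedMod (𝒯 : TopTheory V T) {X Y : Type u} (φ : T X → Y → V) : Prop :=
  𝒯.unit ≤ ⨅ y : Y, ⨆ 𝔵 : T X, φ 𝔵 y

/-- A dense `𝒯`-functor: `f_*` is inhabited. -/
def Dense {X Y : Type u} (b : 𝒯.TCatStr Y) (f : X → Y) : Prop :=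
  𝒯.InhabitedMod (modStar b f)

/-- The underlying set of `X⁺ = {ψ ∈ X̂ ∣ ψ inhabited}`. -/
def Plus {X : Type u} (a : 𝒯.TCatStr X) : Type u :=
  {ψ : Hat a // 𝒯.InhabitedMod (fun 𝔵 (_ : PUnit.{u + 1}) => ψ.1 𝔵)}

/-- `ps` is the `𝒯`-category structure on `X⁺` inherited from `X̂`. -/
def IsPlusStr {X : Type u} (a : 𝒯.TCatStr X) (hs : 𝒯.TCatStr (Hat a))
    (ps : 𝒯.TCatStr (Plus a)) : Prop :=
  ∀ (𝔭 : T (Plus a)) (ψ : Plus a), ps.rel 𝔭 ψ = hs.rel (𝒯.map Subtype.val 𝔭) ψ.1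

/-- Inhabited-cocompleteness: all colimits with inhabited weights exist. -/
def ICocomplete {X : Type u} (a : 𝒯.TCatStr X) : Prop :=
  ∀ (A Z : Type u) (as : 𝒯.TCatStr A) (cs : 𝒯.TCatStr Z) (h : A → X),
    IsTFunctor as a h → ∀ ψ : T A → Z → V, 𝒯.IsTModRel as.rel cs.rel ψ →
      𝒯.InhabitedMod ψ → ∃ g : Z → X, IsTFunctor cs a g ∧ IsColimit a h ψ g

/-- Inhabited-cocontinuity: preservation of all colimits with inhabited weights. -/
def ICocontinuous {X Y : Type u} (a : 𝒯.TCatStr X) (b : 𝒯.TCatStr Y) (f : X → Y) : Prop :=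
  ∀ (A Z : Type u) (as : 𝒯.TCatStr A) (cs : 𝒯.TCatStr Z) (h : A → X)
    (ψ : T A → Z → V) (g : Z → X),
    IsTFunctor as a h → 𝒯.IsTModRel as.rel cs.rel ψ → 𝒯.InhabitedMod ψ →
      IsTFunctor cs a g → IsColimit a h ψ g → IsColimit b (f ∘ h) ψ (f ∘ g)

section Quantale

lemma tens_iSup {ι : Sort*} (u : V) (f : ι → V) :
    𝒯.tens u (⨆ i, f i) = ⨆ i, 𝒯.tens u (f i) := by
  rw [← sSup_range, 𝒯.tens_sSup, iSup_range]

lemma iSup_tens {ι : Sort*} (f : ι → V) (v : V) :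
    𝒯.tens (⨆ i, f i) v = ⨆ i, 𝒯.tens (f i) v := by
  simp only [𝒯.tens_comm _ v, tens_iSup]

lemma tens_mono_right {u v v' : V} (h : v ≤ v') : 𝒯.tens u v ≤ 𝒯.tens u v' := by
  calc 𝒯.tens u v ≤ ⨆ w ∈ ({v, v'} : Set V), 𝒯.tens u w :=
        le_iSup₂ (f := fun w _ => 𝒯.tens u w) v (Set.mem_insert v _)
    _ = 𝒯.tens u v' := by rw [← 𝒯.tens_sSup, sSup_pair, sup_eq_right.2 h]

lemma tens_mono_left {u u' v : V} (h : u ≤ u') : 𝒯.tens u v ≤ 𝒯.tens u' v := by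
  rw [𝒯.tens_comm u, 𝒯.tens_comm u']
  exact tens_mono_right h

lemma tens_mono {u u' v v' : V} (h : u ≤ u') (h' : v ≤ v') :
    𝒯.tens u v ≤ 𝒯.tens u' v' :=
  (tens_mono_left h).trans (tens_mono_right h')

lemma tens_unit (v : V) : 𝒯.tens v 𝒯.unit = v := by
  rw [𝒯.tens_comm, 𝒯.unit_tens]

lemma le_ihom_iff {u z w : V} : z ≤ 𝒯.ihom u w ↔ 𝒯.tens u z ≤ w := by
  refine ⟨fun h => (tens_mono_right h).trans ?_, fun h => le_sSup h⟩
  rw [ihom, 𝒯.tens_sSup]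
  exact iSup₂_le fun _ hv => hv

lemma tens_ihom_le (u w : V) : 𝒯.tens u (𝒯.ihom u w) ≤ w :=
  le_ihom_iff.1 le_rfl

lemma ihom_mono_right {u w w' : V} (h : w ≤ w') : 𝒯.ihom u w ≤ 𝒯.ihom u w' :=
  le_ihom_iff.2 ((tens_ihom_le u w).trans h)

lemma ihom_le_of_unit_le {u w : V} (h : 𝒯.unit ≤ u) : 𝒯.ihom u w ≤ w :=
  calc 𝒯.ihom u w = 𝒯.tens 𝒯.unit (𝒯.ihom u w) := (𝒯.unit_tens _).symm
    _ ≤ w := (tens_mono_left h).trans (tens_ihom_le u w)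

end Quantale

section MonadAlgebra

@[simp]
lemma map_map {X Y Z : Type u} (g : Y → Z) (f : X → Y) (𝔵 : T X) :
    𝒯.map g (𝒯.map f 𝔵) = 𝒯.map (fun x => g (f x)) 𝔵 :=
  (𝒯.map_comp g f 𝔵).symm

@[simp]
lemma map_id' {X : Type u} (𝔵 : T X) : 𝒯.map (fun x => x) 𝔵 = 𝔵 :=
  congrFun 𝒯.map_id 𝔵

lemma unit_le_xi_map {W : Type u} {φ : W → V} (h : ∀ w, 𝒯.unit ≤ φ w) (𝔴 : T W) :
    𝒯.unit ≤ 𝒯.xi (𝒯.map φ 𝔴) := by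
  rw [← 𝒯.xi_unit 𝔴]
  exact 𝒯.xi_mono _ _ h 𝔴

lemma xi_map_tens {W : Type u} (φ χ : W → V) (𝔴 : T W) :
    𝒯.xi (𝒯.map (fun w => 𝒯.tens (φ w) (χ w)) 𝔴) =
      𝒯.tens (𝒯.xi (𝒯.map φ 𝔴)) (𝒯.xi (𝒯.map χ 𝔴)) := by
  simpa using 𝒯.xi_tens (𝒯.map (fun w => (φ w, χ w)) 𝔴)

lemma tens_xi_map_le {W : Type u} {φ χ ω : W → V} (h : ∀ w, 𝒯.tens (φ w) (χ w) ≤ ω w)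
    (𝔴 : T W) : 𝒯.tens (𝒯.xi (𝒯.map φ 𝔴)) (𝒯.xi (𝒯.map χ 𝔴)) ≤ 𝒯.xi (𝒯.map ω 𝔴) := by
  rw [← xi_map_tens]
  exact 𝒯.xi_mono _ _ h 𝔴

lemma xi_map_xi_map {W : Type u} (φ : W → V) (𝔚 : T (T W)) :
    𝒯.xi (𝒯.map (fun 𝔴 => 𝒯.xi (𝒯.map φ 𝔴)) 𝔚) = 𝒯.xi (𝒯.map φ (𝒯.m 𝔚)) := by
  rw [𝒯.m_nat, 𝒯.xi_m, map_map]

lemma xi_map_le_of_le_iSup_fiber {W Y : Type u} (f : W → Y) (φ : W → V) {χ : Y → V}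
    (hχ : ∀ y, χ y ≤ ⨆ w : {w : W // f w = y}, φ w.1) {𝔶 : T Y} {v : V}
    (H : ∀ 𝔴 : T W, 𝒯.map f 𝔴 = 𝔶 → 𝒯.xi (𝒯.map φ 𝔴) ≤ v) : 𝒯.xi (𝒯.map χ 𝔶) ≤ v := by
  refine (𝒯.xi_mono _ _ hχ 𝔶).trans ?_
  rw [← 𝒯.xi_nat]
  exact iSup_le fun 𝔴 => H 𝔴.1 𝔴.2

end MonadAlgebra

section Txi

lemma xi_map_le_Txi {W X Y : Type u} (r : X → Y → V) (f : W → X) (g : W → Y) (𝔴 : T W) :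
    𝒯.xi (𝒯.map (fun w => r (f w) (g w)) 𝔴) ≤ 𝒯.Txi r (𝒯.map f 𝔴) (𝒯.map g 𝔴) :=
  le_iSup_of_le ⟨𝒯.map (fun w => (f w, g w)) 𝔴, by simp, by simp⟩ (by simp)

lemma Txi_le {X Y : Type u} {r : X → Y → V} {𝔵 : T X} {𝔶 : T Y} {v : V}
    (H : ∀ 𝔱 : T (X × Y), 𝒯.map Prod.fst 𝔱 = 𝔵 → 𝒯.map Prod.snd 𝔱 = 𝔶 →
      𝒯.xi (𝒯.map (fun p => r p.1 p.2) 𝔱) ≤ v) : 𝒯.Txi r 𝔵 𝔶 ≤ v :=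
  iSup_le fun 𝔱 => H 𝔱.1 𝔱.2.1 𝔱.2.2

lemma Txi_comp_le {X Y X' Y' : Type u} (r : X' → Y' → V) (f : X → X') (g : Y → Y')
    (𝔵 : T X) (𝔶 : T Y) :
    𝒯.Txi (fun x y => r (f x) (g y)) 𝔵 𝔶 ≤ 𝒯.Txi r (𝒯.map f 𝔵) (𝒯.map g 𝔶) :=
  Txi_le fun 𝔱 h₁ h₂ => by
    simpa [← h₁, ← h₂] using xi_map_le_Txi r (fun p : X × Y => f p.1) (fun p => g p.2) 𝔱

lemma Txi_mono {X Y : Type u} {r r' : X → Y → V} (h : ∀ x y, r x y ≤ r' x y)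
    (𝔵 : T X) (𝔶 : T Y) : 𝒯.Txi r 𝔵 𝔶 ≤ 𝒯.Txi r' 𝔵 𝔶 :=
  iSup_mono fun 𝔱 => 𝒯.xi_mono _ _ (fun p => h p.1 p.2) 𝔱.1

lemma le_Txi_e {X Y : Type u} (r : X → Y → V) (x : X) (y : Y) :
    r x y ≤ 𝒯.Txi r (𝒯.e x) (𝒯.e y) := by
  simpa [𝒯.e_nat, 𝒯.xi_e] using xi_map_le_Txi (𝒯 := 𝒯) r Prod.fst Prod.snd (𝒯.e (x, y))

end Txi

section Kleisli

lemma le_kleisli {X Y Z : Type u} (β : T Y → Z → V) (α : T X → Y → V)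
    (𝔛 : T (T X)) (𝔶 : T Y) (z : Z) :
    𝒯.tens (𝒯.Txi α 𝔛 𝔶) (β 𝔶 z) ≤ 𝒯.kleisli β α (𝒯.m 𝔛) z :=
  le_iSup_of_le ⟨𝔛, rfl⟩ (le_iSup (fun 𝔶 => 𝒯.tens (𝒯.Txi α 𝔛 𝔶) (β 𝔶 z)) 𝔶)

lemma kleisli_le {X Y Z : Type u} {β : T Y → Z → V} {α : T X → Y → V} {φ : T X → Z → V}
    {z : Z} (H : ∀ 𝔛 𝔶, 𝒯.tens (𝒯.Txi α 𝔛 𝔶) (β 𝔶 z) ≤ φ (𝒯.m 𝔛) z) (𝔵 : T X) :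
    𝒯.kleisli β α 𝔵 z ≤ φ 𝔵 z :=
  iSup_le fun ⟨𝔛, h𝔛⟩ => iSup_le fun 𝔶 => h𝔛 ▸ H 𝔛 𝔶

end Kleisli

section Categories

lemma TCatStr.tens_Txi_le {X : Type u} (a : 𝒯.TCatStr X) (𝔛 : T (T X)) (𝔶 : T X) (x : X) :
    𝒯.tens (𝒯.Txi a.rel 𝔛 𝔶) (a.rel 𝔶 x) ≤ a.rel (𝒯.m 𝔛) x :=
  (le_kleisli _ _ _ _ _).trans (a.comp _ x)

lemma TCatStr.tens_xi_le {X : Type u} (a : 𝒯.TCatStr X) {𝔲 : T (T X × X)} {𝔵 : T X}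
    (h𝔲 : 𝒯.map Prod.snd 𝔲 = 𝔵) (x : X) :
    𝒯.tens (𝒯.xi (𝒯.map (fun p => a.rel p.1 p.2) 𝔲)) (a.rel 𝔵 x) ≤
      a.rel (𝒯.m (𝒯.map Prod.fst 𝔲)) x := by
  subst h𝔲
  exact (tens_mono_left (xi_map_le_Txi a.rel Prod.fst Prod.snd 𝔲)).trans (a.tens_Txi_le _ _ x)

lemma TCatStr.rel_map_le {X : Type u} (a : 𝒯.TCatStr X) {f : X → X}
    (hf : ∀ x, 𝒯.unit ≤ a.rel (𝒯.e x) (f x)) (𝔵 : T X) (x : X) :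
    a.rel (𝒯.map f 𝔵) x ≤ a.rel 𝔵 x := by
  have h : 𝒯.unit ≤ 𝒯.Txi a.rel (𝒯.map 𝒯.e 𝔵) (𝒯.map f 𝔵) :=
    (unit_le_xi_map hf 𝔵).trans (xi_map_le_Txi a.rel 𝒯.e f 𝔵)
  calc a.rel (𝒯.map f 𝔵) x = 𝒯.tens 𝒯.unit (a.rel (𝒯.map f 𝔵) x) := (𝒯.unit_tens _).symm
    _ ≤ a.rel (𝒯.m (𝒯.map 𝒯.e 𝔵)) x := (tens_mono_left h).trans (a.tens_Txi_le _ _ x)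
    _ = a.rel 𝔵 x := by rw [𝒯.m_map_e]

lemma TCatStr.rel_le_rel {X : Type u} (a : 𝒯.TCatStr X) {x x' : X}
    (h : 𝒯.unit ≤ a.rel (𝒯.e x) x') (𝔵 : T X) : a.rel 𝔵 x ≤ a.rel 𝔵 x' :=
  calc a.rel 𝔵 x = 𝒯.tens (a.rel 𝔵 x) 𝒯.unit := (tens_unit _).symm
    _ ≤ a.rel (𝒯.m (𝒯.e 𝔵)) x' := (tens_mono (le_Txi_e _ _ _) h).trans (a.tens_Txi_le _ _ x')
    _ = a.rel 𝔵 x' := by rw [𝒯.m_e]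

lemma funEquiv_of_rel_map_eq {A X : Type u} {a : 𝒯.TCatStr X} {f g : A → X}
    (h : ∀ (𝔞 : T A) (x : X), a.rel (𝒯.map f 𝔞) x = a.rel (𝒯.map g 𝔞) x) :
    FunEquiv a f g := by
  have he : ∀ a₀ x, a.rel (𝒯.e (f a₀)) x = a.rel (𝒯.e (g a₀)) x := fun a₀ x => by
    simpa only [𝒯.e_nat] using h (𝒯.e a₀) x
  refine fun 𝔵 a₀ => le_antisymm (a.rel_le_rel ?_ 𝔵) (a.rel_le_rel ?_ 𝔵)
  · exact (he a₀ (g a₀)).symm ▸ a.le_refl (g a₀)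
  · exact he a₀ (f a₀) ▸ a.le_refl (f a₀)

lemma FullyFaithful.isTFunctor {X Y : Type u} {a : 𝒯.TCatStr X} {b : 𝒯.TCatStr Y}
    {f : X → Y} (hf : FullyFaithful a b f) : IsTFunctor a b f :=
  fun 𝔵 x => (hf 𝔵 x).le

lemma IsTFunctor.Txi_le {X Y : Type u} {a : 𝒯.TCatStr X} {b : 𝒯.TCatStr Y} {f : X → Y}
    (hf : IsTFunctor a b f) (𝔛 : T (T X)) (𝔵 : T X) :
    𝒯.Txi a.rel 𝔛 𝔵 ≤ 𝒯.Txi b.rel (𝒯.map (𝒯.map f) 𝔛) (𝒯.map f 𝔵) :=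
  (Txi_mono hf 𝔛 𝔵).trans (Txi_comp_le _ _ _ 𝔛 𝔵)

lemma isTModRel_modStar {X Y : Type u} {a : 𝒯.TCatStr X} {b : 𝒯.TCatStr Y} {f : X → Y}
    (hf : IsTFunctor a b f) : 𝒯.IsTModRel a.rel b.rel (modStar b f) := by
  refine ⟨fun 𝔵 y => kleisli_le (fun 𝔛 𝔶 => ?_) 𝔵, fun 𝔵 y => kleisli_le (fun 𝔛 𝔶 => ?_) 𝔵⟩
  all_goals
    simp only [modStar, 𝒯.m_nat]
    refine le_trans (tens_mono_left ?_) (b.tens_Txi_le _ _ y)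
  · exact hf.Txi_le 𝔛 𝔶
  · have h := Txi_comp_le (𝒯 := 𝒯) b.rel (𝒯.map f) (fun y => y) 𝔛 𝔶
    rw [map_id'] at h
    exact h

end Categories

section Yoneda

variable {X : Type u} {a : 𝒯.TCatStr X} {hs : 𝒯.TCatStr (Hat a)}

lemma IsHatStr.rel_map (hhs : IsHatStr a hs) {W : Type u} (f : W → Hat a) (𝔴 : T W)
    (ψ : Hat a) : hs.rel (𝒯.map f 𝔴) ψ = 𝒯.powRel X (𝒯.map (fun w => (f w).1) 𝔴) ψ.1 :=
  (hhs _ ψ).trans (congrArg (𝒯.powRel X · ψ.1) (map_map _ _ _))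

lemma IsHatStr.rel_mono (hhs : IsHatStr a hs) {ψ χ : Hat a} (h : ∀ 𝔵, ψ.1 𝔵 ≤ χ.1 𝔵)
    (𝔭 : T (Hat a)) : hs.rel 𝔭 ψ ≤ hs.rel 𝔭 χ := by
  rw [hhs, hhs]
  exact iInf_mono fun _ => ihom_mono_right (h _)

lemma rel_map_yoneda (hhs : IsHatStr a hs) {y : X → Hat a} (hy : IsYoneda a y)
    (𝔵 : T X) (ψ : Hat a) : hs.rel (𝒯.map y 𝔵) ψ = ψ.1 𝔵 := by
  rw [hhs.rel_map]
  apply le_antisymm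
  · refine (iInf_le _ ⟨𝒯.map (fun x => (𝒯.e x, (y x).1)) 𝔵, by simp⟩).trans ?_
    simp only [map_map, 𝒯.m_map_e]
    refine ihom_le_of_unit_le (unit_le_xi_map (fun x => ?_) 𝔵)
    rw [hy]
    exact a.le_refl x
  refine le_iInf fun ⟨q, hq⟩ => le_ihom_iff.2 ?_
  obtain ⟨𝔴, h₁, h₂⟩ := 𝒯.map_bc Prod.snd (fun x => (y x).1) q 𝔵 hq
  have hev : 𝒯.xi (𝒯.map (fun p : T X × (T X → V) => p.2 p.1) q) ≤
      𝒯.Txi a.rel (𝒯.map Prod.fst q) 𝔵 := by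
    have := xi_map_le_Txi (𝒯 := 𝒯) a.rel
      (fun w : {p : (T X × (T X → V)) × X // p.1.2 = (y p.2).1} => w.1.1.1) (fun w => w.1.2) 𝔴
    simp only [← h₁, ← h₂, map_map]
    convert this using 2
    exact congrArg (𝒯.map · 𝔴) (funext fun w => by rw [w.2]; exact hy _ _)
  exact (tens_mono_left hev).trans ((le_kleisli _ _ _ _ _).trans (ψ.2.1 _ PUnit.unit))

lemma yoneda_fullyFaithful (hhs : IsHatStr a hs) {y : X → Hat a} (hy : IsYoneda a y) :
    FullyFaithful a hs y := fun 𝔵 x => by rw [rel_map_yoneda hhs hy, hy]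

end Yoneda

section LeftAdjoint

variable {X : Type u} {a : 𝒯.TCatStr X} {hs : 𝒯.TCatStr (Hat a)} {y : X → Hat a}

lemma exists_leftInverse_of_injective (hhs : IsHatStr a hs) (hy : IsYoneda a y)
    (hinj : Injective a) : ∃ S : Hat a → X, IsTFunctor hs a S ∧ FunEquiv a (S ∘ y) id :=
  hinj X (Hat a) a hs id y (fun 𝔵 x => by rw [𝒯.map_id]; rfl)
    (yoneda_fullyFaithful hhs hy).isTFunctor (yoneda_fullyFaithful hhs hy)

lemma isAdjunction_of_leftInverse (hhs : IsHatStr a hs) (hy : IsYoneda a y)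
    {S : Hat a → X} (hS : IsTFunctor hs a S) (hSy : FunEquiv a (S ∘ y) id) :
    IsAdjunction hs a S y := by
  refine ⟨fun 𝔭 ψ => hhs.rel_mono (fun 𝔵 => ?_) 𝔭, fun 𝔵 x => (hSy 𝔵 x).le⟩
  calc ψ.1 𝔵 = hs.rel (𝒯.map y 𝔵) ψ := (rel_map_yoneda hhs hy 𝔵 ψ).symm
    _ ≤ a.rel (𝒯.map (fun x => S (y x)) 𝔵) (S ψ) := by rw [← map_map S y]; exact hS _ ψ
    _ ≤ a.rel 𝔵 (S ψ) := a.rel_map_le (fun x => (hSy (𝒯.e x) x).symm ▸ a.le_refl x) 𝔵 _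
    _ = (y (S ψ)).1 𝔵 := (hy _ _).symm

lemma rel_map_eq_of_isAdjunction (hhs : IsHatStr a hs) (hy : IsYoneda a y)
    {S : Hat a → X} (hS : IsTFunctor hs a S) (hadj : IsAdjunction hs a S y)
    (𝔭 : T (Hat a)) (x : X) : a.rel (𝒯.map S 𝔭) x = hs.rel 𝔭 (y x) := by
  refine le_antisymm ?_ ((hS 𝔭 (y x)).trans (hadj.2 _ x))
  calc a.rel (𝒯.map S 𝔭) x = hs.rel (𝒯.map (fun ψ => y (S ψ)) 𝔭) (y x) := by
        rw [← map_map y S]; exact yoneda_fullyFaithful hhs hy _ x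
    _ ≤ hs.rel 𝔭 (y x) := hs.rel_map_le (fun ψ => (hs.le_refl ψ).trans (hadj.1 _ ψ)) 𝔭 _

end LeftAdjoint

section Extension

lemma le_extend_iff {X Y Z : Type u} {φ : T X → Y → V} {ψ : T X → Z → V} {𝔷 : T Z} {y : Y}
    {v : V} : v ≤ 𝒯.extend φ ψ 𝔷 y ↔ ∀ 𝔛, 𝒯.tens (𝒯.Txi ψ 𝔛 𝔷) v ≤ φ (𝒯.m 𝔛) y := by
  simp only [extend, le_iInf_iff, le_ihom_iff, iSup_tens, iSup_le_iff, Subtype.forall]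
  exact ⟨fun H 𝔛 => H _ 𝔛 rfl, fun H _ 𝔛 h𝔛 => h𝔛 ▸ H 𝔛⟩

lemma FullyFaithful.Txi_modStar_le {A B : Type u} {as : 𝒯.TCatStr A} {bs : 𝒯.TCatStr B}
    {i : A → B} (hi : FullyFaithful as bs i) (𝔄 : T (T A)) (𝔞 : T A) :
    𝒯.Txi (modStar bs i) 𝔄 (𝒯.map i 𝔞) ≤ 𝒯.Txi as.rel 𝔄 𝔞 := by
  refine Txi_le fun 𝔱 h₁ h₂ => ?_
  obtain ⟨𝔰, hs₁, hs₂⟩ := 𝒯.map_bc Prod.snd i 𝔱 𝔞 h₂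
  have := xi_map_le_Txi (𝒯 := 𝒯) as.rel (fun s : {p : (T A × B) × A // p.1.2 = i p.2} =>
    s.1.1.1) (fun s => s.1.2) 𝔰
  simp only [← h₁, ← hs₁, ← hs₂, map_map]
  convert this using 2
  exact congrArg (𝒯.map · 𝔰) (funext fun s => by simp only [modStar, s.2]; exact (hi _ _).symm)

lemma extend_modStar_map_of_fullyFaithful {A B X : Type u} {as : 𝒯.TCatStr A}
    {bs : 𝒯.TCatStr B} {a : 𝒯.TCatStr X} {f : A → X} {i : A → B} (hf : IsTFunctor as a f)
    (hi : FullyFaithful as bs i) (𝔞 : T A) (x : X) :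
    𝒯.extend (modStar a f) (modStar bs i) (𝒯.map i 𝔞) x = a.rel (𝒯.map f 𝔞) x := by
  refine le_antisymm ?_ (le_extend_iff.2 fun 𝔄 => ?_)
  · have hunit : 𝒯.unit ≤ 𝒯.Txi (modStar bs i) (𝒯.map 𝒯.e 𝔞) (𝒯.map i 𝔞) := by
      refine (unit_le_xi_map (fun a₀ => ?_) 𝔞).trans (xi_map_le_Txi _ 𝒯.e i 𝔞)
      simpa only [modStar, 𝒯.e_nat] using bs.le_refl (i a₀)
    calc 𝒯.extend (modStar a f) (modStar bs i) (𝒯.map i 𝔞) x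
        = 𝒯.tens 𝒯.unit (𝒯.extend (modStar a f) (modStar bs i) (𝒯.map i 𝔞) x) :=
          (𝒯.unit_tens _).symm
      _ ≤ modStar a f (𝒯.m (𝒯.map 𝒯.e 𝔞)) x :=
          (tens_mono_left hunit).trans (le_extend_iff.1 le_rfl _)
      _ = a.rel (𝒯.map f 𝔞) x := by rw [𝒯.m_map_e]; rfl
  · refine (tens_mono_left ((hi.Txi_modStar_le 𝔄 𝔞).trans (hf.Txi_le 𝔄 𝔞))).trans ?_
    simpa only [modStar, 𝒯.m_nat] using a.tens_Txi_le _ _ x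

lemma injective_of_cocomplete {X : Type u} {a : 𝒯.TCatStr X} (hc : Cocomplete a) :
    Injective a := by
  intro A B as bs f i hf hi hiff
  obtain ⟨g, hg, hcolim⟩ := hc A B as bs f hf (modStar bs i) (isTModRel_modStar hi)
  refine ⟨g, hg, funEquiv_of_rel_map_eq fun 𝔞 x => ?_⟩
  rw [𝒯.map_comp, ← extend_modStar_map_of_fullyFaithful hf hiff]
  exact hcolim _ x

end Extension

section Presheaf

lemma map_const_eq_e {W Y : Type u} {𝔴 : T W}
    (h𝔴 : 𝒯.map (fun _ => PUnit.unit.{u + 1}) 𝔴 = 𝒯.e PUnit.unit) (y : Y) :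
    𝒯.map (fun _ => y) 𝔴 = 𝒯.e y := by
  rw [← 𝒯.e_nat (fun _ => y), ← h𝔴, map_map]

lemma isPresheaf_of {X : Type u} {a : 𝒯.TCatStr X} {φ : T X → V}
    (hrel : ∀ 𝔛 𝔵, 𝒯.tens (𝒯.Txi a.rel 𝔛 𝔵) (φ 𝔵) ≤ φ (𝒯.m 𝔛))
    (hxi : ∀ 𝔛 : T (T X), 𝒯.map (fun _ => PUnit.unit.{u + 1}) 𝔛 = 𝒯.e PUnit.unit →
      𝒯.xi (𝒯.map φ 𝔛) ≤ φ (𝒯.m 𝔛)) :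
    IsPresheaf a φ := by
  refine ⟨fun 𝔵 _ => kleisli_le (φ := fun 𝔵 _ => φ 𝔵) (fun 𝔛 𝔶 => hrel 𝔛 𝔶) 𝔵,
    fun 𝔵 _ => kleisli_le (φ := fun 𝔵 _ => φ 𝔵) (fun 𝔛 𝔭 => ?_) 𝔵⟩
  simp only [unitRel, tens_iSup, tens_unit, iSup_le_iff]
  rintro rfl
  refine Txi_le fun 𝔱 h₁ h₂ => ?_
  subst h₁
  have h𝔱 : 𝒯.map (fun _ => PUnit.unit.{u + 1}) (𝒯.map Prod.fst 𝔱) = 𝒯.e PUnit.unit := by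
    rw [map_map, ← h₂]
  simpa only [map_map] using hxi _ h𝔱

end Presheaf

section ColimPresheaf

variable {X A Z : Type u} (a : 𝒯.TCatStr X) (h : A → X) (ψ : T A → Z → V)

def colimTerm (w : T (T X × A)) (z : Z) : V :=
  𝒯.tens (𝒯.xi (𝒯.map (fun p => a.rel p.1 (h p.2)) w)) (ψ (𝒯.map Prod.snd w) z)

/-- The presheaf `ψ(-,z) ∘ h^*` on `X`, whose supremum is the `ψ`-weighted colimit of `h` at
`z`. The suprema over `𝔛 : T (T X)` and `𝔞 : T A` in the Kleisli convolution are merged into a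
single one over `w : T (T X × A)`. -/
def colimPresheaf (z : Z) (𝔵 : T X) : V :=
  ⨆ w : {w : T (T X × A) // 𝒯.m (𝒯.map Prod.fst w) = 𝔵}, colimTerm a h ψ w.1 z

variable {a h ψ}

lemma colimTerm_le (w : T (T X × A)) (z : Z) :
    colimTerm a h ψ w z ≤ colimPresheaf a h ψ z (𝒯.m (𝒯.map Prod.fst w)) :=
  le_iSup_of_le ⟨w, rfl⟩ le_rfl

lemma weight_le_colimPresheaf (𝔞 : T A) (z : Z) :
    ψ 𝔞 z ≤ colimPresheaf a h ψ z (𝒯.map h 𝔞) := by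
  have := colimTerm_le (a := a) (h := h) (ψ := ψ) (𝒯.map (fun a₀ => (𝒯.e (h a₀), a₀)) 𝔞) z
  simp only [colimTerm, map_map, map_id'] at this
  rw [← 𝒯.m_map_e (𝒯.map h 𝔞), map_map]
  refine le_trans ?_ this
  calc ψ 𝔞 z = 𝒯.tens 𝒯.unit (ψ 𝔞 z) := (𝒯.unit_tens _).symm
    _ ≤ _ := tens_mono_left (unit_le_xi_map (fun a₀ => a.le_refl (h a₀)) 𝔞)

variable {cs : 𝒯.TCatStr Z}

lemma xi_map_weight_le (hψ : ∀ 𝔞 z, 𝒯.kleisli cs.rel ψ 𝔞 z ≤ ψ 𝔞 z) {𝔄 : T (T A)}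
    (h𝔄 : 𝒯.map (fun _ => PUnit.unit.{u + 1}) 𝔄 = 𝒯.e PUnit.unit) (z : Z) :
    𝒯.xi (𝒯.map (fun 𝔞 => ψ 𝔞 z) 𝔄) ≤ ψ (𝒯.m 𝔄) z :=
  calc 𝒯.xi (𝒯.map (fun 𝔞 => ψ 𝔞 z) 𝔄) ≤ 𝒯.Txi ψ 𝔄 (𝒯.e z) := by
        simpa [map_const_eq_e h𝔄 z] using xi_map_le_Txi (𝒯 := 𝒯) ψ (fun 𝔞 => 𝔞) (fun _ => z) 𝔄
    _ = 𝒯.tens (𝒯.Txi ψ 𝔄 (𝒯.e z)) 𝒯.unit := (tens_unit _).symm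
    _ ≤ 𝒯.kleisli cs.rel ψ (𝒯.m 𝔄) z :=
        (tens_mono_right (cs.le_refl z)).trans (le_kleisli _ _ _ _ _)
    _ ≤ ψ (𝒯.m 𝔄) z := hψ _ z

lemma xi_map_colimPresheaf_le (hψ : ∀ 𝔞 z, 𝒯.kleisli cs.rel ψ 𝔞 z ≤ ψ 𝔞 z) (z : Z)
    {𝔛 : T (T X)} (h𝔛 : 𝒯.map (fun _ => PUnit.unit.{u + 1}) 𝔛 = 𝒯.e PUnit.unit) :
    𝒯.xi (𝒯.map (colimPresheaf a h ψ z) 𝔛) ≤ colimPresheaf a h ψ z (𝒯.m 𝔛) := by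
  refine xi_map_le_of_le_iSup_fiber (fun w => 𝒯.m (𝒯.map Prod.fst w))
    (colimTerm a h ψ · z) (fun _ => le_rfl) fun 𝔚 h𝔚 => ?_
  subst h𝔚
  have hpt : 𝒯.map (fun _ => PUnit.unit.{u + 1}) (𝒯.map (𝒯.map Prod.snd) 𝔚) = 𝒯.e PUnit.unit := by
    simpa only [map_map] using h𝔛
  calc 𝒯.xi (𝒯.map (colimTerm a h ψ · z) 𝔚)
      = 𝒯.tens (𝒯.xi (𝒯.map (fun p => a.rel p.1 (h p.2)) (𝒯.m 𝔚)))
          (𝒯.xi (𝒯.map (fun 𝔞 => ψ 𝔞 z) (𝒯.map (𝒯.map Prod.snd) 𝔚))) := by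
        simp only [colimTerm, xi_map_tens, xi_map_xi_map, map_map]
    _ ≤ colimTerm a h ψ (𝒯.m 𝔚) z := by
        rw [colimTerm, 𝒯.m_nat Prod.snd]
        exact tens_mono_right (xi_map_weight_le hψ hpt z)
    _ ≤ colimPresheaf a h ψ z (𝒯.m (𝒯.map (fun w => 𝒯.m (𝒯.map Prod.fst w)) 𝔚)) := by
        simpa only [𝒯.m_nat, 𝒯.m_assoc, map_map] using
          colimTerm_le (a := a) (h := h) (ψ := ψ) (𝒯.m 𝔚) z

lemma tens_xi_colimTerm_le {𝔱 : T (T X × X)} {w : T (T X × A)}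
    (hw : 𝒯.m (𝒯.map Prod.fst w) = 𝒯.map Prod.snd 𝔱) (z : Z) :
    𝒯.tens (𝒯.xi (𝒯.map (fun p => a.rel p.1 p.2) 𝔱)) (colimTerm a h ψ w z) ≤
      colimPresheaf a h ψ z (𝒯.m (𝒯.map Prod.fst 𝔱)) := by
  -- The two weak-pullback conditions merge `𝔱` and `w` into a single `𝔰`, along which the
  -- composition law of `a` can be applied pointwise.
  obtain ⟨𝔛, hA, hB⟩ := 𝒯.m_bc Prod.snd (𝒯.map Prod.fst w) 𝔱 hw
  obtain ⟨𝔰, hs₁, hs₂⟩ := 𝒯.map_bc (𝒯.map Prod.snd) Prod.fst 𝔛 w hA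
  set w' := 𝒯.map (fun s => (𝒯.m (𝒯.map Prod.fst s.1.1), s.1.2.2)) 𝔰
  calc _ = 𝒯.tens (𝒯.tens (𝒯.xi (𝒯.map (fun s => 𝒯.xi (𝒯.map (fun p => a.rel p.1 p.2) s.1.1)) 𝔰))
          (𝒯.xi (𝒯.map (fun s => a.rel s.1.2.1 (h s.1.2.2)) 𝔰))) (ψ (𝒯.map Prod.snd w) z) := by
        rw [colimTerm, ← 𝒯.tens_assoc, ← hB, ← xi_map_xi_map, ← hs₁, ← hs₂]
        simp only [map_map]
    _ ≤ 𝒯.tens (𝒯.xi (𝒯.map (fun s => a.rel (𝒯.m (𝒯.map Prod.fst s.1.1)) (h s.1.2.2)) 𝔰))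
          (ψ (𝒯.map Prod.snd w) z) :=
        tens_mono_left (tens_xi_map_le (fun s => a.tens_xi_le s.2 _) 𝔰)
    _ = colimTerm a h ψ w' z := by simp only [colimTerm, w', ← hs₂, map_map]
    _ ≤ colimPresheaf a h ψ z (𝒯.m (𝒯.map Prod.fst w')) := colimTerm_le w' z
    _ = colimPresheaf a h ψ z (𝒯.m (𝒯.map Prod.fst 𝔱)) := by
        rw [← hB, 𝒯.m_nat, 𝒯.m_assoc, ← hs₁]
        simp only [w', map_map]

lemma colimPresheaf_isPresheaf (hψ : ∀ 𝔞 z, 𝒯.kleisli cs.rel ψ 𝔞 z ≤ ψ 𝔞 z) (z : Z) :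
    IsPresheaf a (colimPresheaf a h ψ z) := by
  refine isPresheaf_of (fun 𝔛 𝔵 => ?_) (fun 𝔛 h𝔛 => xi_map_colimPresheaf_le hψ z h𝔛)
  rw [colimPresheaf, tens_iSup]
  refine iSup_le fun ⟨w, hw⟩ => ?_
  rw [Txi, iSup_tens]
  refine iSup_le fun ⟨𝔱, h₁, h₂⟩ => ?_
  subst h₁
  exact tens_xi_colimTerm_le (hw.trans h₂.symm) z

lemma xi_map_colimPresheaf_uncurry_le (𝔳 : T (T X × Z)) :
    𝒯.xi (𝒯.map (fun p => colimPresheaf a h ψ p.2 p.1) 𝔳) ≤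
      ⨆ c : {c : T (T X × A) × T (T A) //
          𝒯.m (𝒯.map Prod.fst c.1) = 𝒯.m (𝒯.map Prod.fst 𝔳) ∧ 𝒯.m c.2 = 𝒯.map Prod.snd c.1},
        𝒯.tens (𝒯.xi (𝒯.map (fun p => a.rel p.1 (h p.2)) c.1.1))
          (𝒯.Txi ψ c.1.2 (𝒯.map Prod.snd 𝔳)) := by
  refine xi_map_le_of_le_iSup_fiber (fun d : T (T X × A) × Z => (𝒯.m (𝒯.map Prod.fst d.1), d.2))
    (fun d => colimTerm a h ψ d.1 d.2)
    (fun p => iSup_le fun ⟨w, hw⟩ => le_iSup_of_le ⟨(w, p.2), by rw [hw]⟩ le_rfl) fun 𝔡 h𝔡 => ?_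
  subst h𝔡
  refine le_iSup_of_le ⟨(𝒯.m (𝒯.map Prod.fst 𝔡), 𝒯.map (fun d => 𝒯.map Prod.snd d.1) 𝔡),
    ?_, ?_⟩ ?_
  · simp only [𝒯.m_nat, 𝒯.m_assoc, map_map]
  · simp only [𝒯.m_nat, map_map]
  simp only [colimTerm, xi_map_tens, map_map]
  refine tens_mono (le_of_eq ?_) (xi_map_le_Txi ψ _ _ 𝔡)
  rw [← xi_map_xi_map, map_map]

lemma le_powRel_colimPresheaf {𝔷 : T Z} {φ : T X → V} {v : V}
    (H : ∀ (𝔚 : T (T X × A)) (𝔄 : T (T A)), 𝒯.m 𝔄 = 𝒯.map Prod.snd 𝔚 →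
      𝒯.tens (𝒯.xi (𝒯.map (fun p => a.rel p.1 (h p.2)) 𝔚)) (𝒯.tens (𝒯.Txi ψ 𝔄 𝔷) v) ≤
        φ (𝒯.m (𝒯.map Prod.fst 𝔚))) :
    v ≤ 𝒯.powRel X (𝒯.map (colimPresheaf a h ψ) 𝔷) φ := by
  refine le_iInf fun ⟨q, hq⟩ => le_ihom_iff.2 ?_
  obtain ⟨𝔱, h₁, h₂⟩ := 𝒯.map_bc Prod.snd (colimPresheaf a h ψ) q 𝔷 hq
  set 𝔳 := 𝒯.map (fun t => (t.1.1.1, t.1.2)) 𝔱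
  have hev : 𝒯.map (fun p => p.2 p.1) q = 𝒯.map (fun p => colimPresheaf a h ψ p.2 p.1) 𝔳 := by
    simp only [← h₁, 𝔳, map_map]
    exact congrArg (𝒯.map · 𝔱) (funext fun t => by rw [t.2])
  have h𝔳₁ : 𝒯.map Prod.fst 𝔳 = 𝒯.map Prod.fst q := by simp only [← h₁, 𝔳, map_map]
  have h𝔳₂ : 𝒯.map Prod.snd 𝔳 = 𝔷 := by simp only [← h₂, 𝔳, map_map]
  refine (tens_mono_left (hev ▸ xi_map_colimPresheaf_uncurry_le 𝔳)).trans ?_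
  rw [iSup_tens]
  refine iSup_le fun ⟨⟨𝔚, 𝔄⟩, c₁, c₂⟩ => ?_
  dsimp only at c₁ c₂ ⊢
  rw [𝒯.tens_assoc, ← h𝔳₁, ← c₁, h𝔳₂]
  exact H 𝔚 𝔄 c₂

lemma rel_le_powRel_colimPresheaf (hψ : ∀ 𝔞 z, 𝒯.kleisli cs.rel ψ 𝔞 z ≤ ψ 𝔞 z)
    (𝔷 : T Z) (z : Z) :
    cs.rel 𝔷 z ≤ 𝒯.powRel X (𝒯.map (colimPresheaf a h ψ) 𝔷) (colimPresheaf a h ψ z) :=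
  le_powRel_colimPresheaf fun 𝔚 _ h𝔄 =>
    calc _ ≤ colimTerm a h ψ 𝔚 z :=
          tens_mono_right ((le_kleisli _ _ _ _ _).trans (h𝔄 ▸ hψ _ z))
      _ ≤ _ := colimTerm_le 𝔚 z

lemma powRel_colimPresheaf_eq_extend (𝔷 : T Z) (x : X) :
    𝒯.powRel X (𝒯.map (colimPresheaf a h ψ) 𝔷) (a.rel · x) = 𝒯.extend (modStar a h) ψ 𝔷 x := by
  refine le_antisymm (le_extend_iff.2 fun 𝔄 => ?_) (le_powRel_colimPresheaf fun 𝔚 𝔄 h𝔄 => ?_)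
  · rw [Txi, iSup_tens]
    refine iSup_le fun ⟨𝔴, h₁, h₂⟩ => ?_
    set q := 𝒯.map (fun p => (𝒯.map h p.1, colimPresheaf a h ψ p.2)) 𝔴
    have hq : 𝒯.map Prod.snd q = 𝒯.map (colimPresheaf a h ψ) 𝔷 := by
      simp only [← h₂, q, map_map]
    have hmq : 𝒯.m (𝒯.map Prod.fst q) = 𝒯.map h (𝒯.m 𝔄) := by
      simp only [𝒯.m_nat, ← h₁, q, map_map]
    have hev : 𝒯.xi (𝒯.map (fun p => ψ p.1 p.2) 𝔴) ≤ 𝒯.xi (𝒯.map (fun p => p.2 p.1) q) := by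
      simpa only [q, map_map] using 𝒯.xi_mono _ _ (fun p => weight_le_colimPresheaf p.1 p.2) 𝔴
    refine (tens_mono hev (iInf_le _ ⟨q, hq⟩)).trans ((tens_ihom_le _ _).trans_eq ?_)
    rw [hmq]
    rfl
  · have hxi := xi_map_le_Txi (𝒯 := 𝒯) a.rel Prod.fst (fun p => h p.2) 𝔚
    rw [← map_map h Prod.snd, ← h𝔄] at hxi
    refine (tens_mono hxi (le_extend_iff.1 le_rfl 𝔄)).trans ?_
    exact a.tens_Txi_le _ _ x

end ColimPresheaf

lemma cocomplete_of_isAdjunction {X : Type u} {a : 𝒯.TCatStr X} {hs : 𝒯.TCatStr (Hat a)}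
    (hhs : IsHatStr a hs) {y : X → Hat a} (hy : IsYoneda a y) {S : Hat a → X}
    (hS : IsTFunctor hs a S) (hadj : IsAdjunction hs a S y) : Cocomplete a := by
  intro A Z as cs h _ ψ hψ
  let P : Z → Hat a := fun z => ⟨colimPresheaf a h ψ z, colimPresheaf_isPresheaf hψ.2 z⟩
  refine ⟨S ∘ P, fun 𝔷 z => ?_, fun 𝔷 x => ?_⟩
  · rw [𝒯.map_comp]
    refine le_trans ?_ (hS _ _)
    rw [hhs.rel_map]
    exact rel_le_powRel_colimPresheaf hψ.2 𝔷 z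
  · rw [modStar, 𝒯.map_comp, rel_map_eq_of_isAdjunction hhs hy hS hadj, hhs.rel_map,
      show (y x).1 = (a.rel · x) from funext (hy x)]
    exact powRel_colimPresheaf_eq_extend 𝔷 x

theorem statement2_general (𝒯 : TopTheory V T) {X : Type u} (a : 𝒯.TCatStr X)
    (hs : 𝒯.TCatStr (Hat a)) (hhs : IsHatStr a hs)
    (y : X → Hat a) (hy : IsYoneda a y) :
    (Injective a ↔ ∃ S : Hat a → X, IsTFunctor hs a S ∧ FunEquiv a (S ∘ y) id) ∧
    (Injective a ↔ ∃ S : Hat a → X, IsTFunctor hs a S ∧ IsAdjunction hs a S y) ∧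
    (Injective a ↔ Cocomplete a) := by
  have h12 := exists_leftInverse_of_injective hhs hy
  have h23 : (∃ S : Hat a → X, IsTFunctor hs a S ∧ FunEquiv a (S ∘ y) id) →
      ∃ S : Hat a → X, IsTFunctor hs a S ∧ IsAdjunction hs a S y :=
    fun ⟨S, hS, hSy⟩ => ⟨S, hS, isAdjunction_of_leftInverse hhs hy hS hSy⟩
  have h34 : (∃ S : Hat a → X, IsTFunctor hs a S ∧ IsAdjunction hs a S y) → Cocomplete a :=
    fun ⟨_, hS, hadj⟩ => cocomplete_of_isAdjunction hhs hy hS hadj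
  have h41 : Cocomplete a → Injective a := injective_of_cocomplete
  exact ⟨⟨h12, h41 ∘ h34 ∘ h23⟩, ⟨h23 ∘ h12, h41 ∘ h34⟩, ⟨h34 ∘ h23 ∘ h12, h41⟩⟩

/-- Theorem 2.4. For a `𝒯`-category `X = (X,a)` the following are
equivalent: (i) `X` is injective (w.r.t. fully faithful `𝒯`-functors); (ii) the Yoneda
functor `y_X : X → X̂` has a left inverse `Sup_X` with `Sup_X · y_X ≅ 1_X`;
(iii) `y_X` has a left adjoint; (iv) `X` is cocomplete. -/
theorem statement2 (𝒯 : TopTheory V T) {X : Type u} (a : 𝒯.TCatStr X)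
    (hs : 𝒯.TCatStr (Hat a)) (hhs : IsHatStr a hs)
    (y : X → Hat a) (hy : IsYoneda a y) (hyf : IsTFunctor a hs y) :
    (Injective a ↔ ∃ S : Hat a → X, IsTFunctor hs a S ∧ FunEquiv a (S ∘ y) id) ∧
    (Injective a ↔ ∃ S : Hat a → X, IsTFunctor hs a S ∧ IsAdjunction hs a S y) ∧
    (Injective a ↔ Cocomplete a) :=
  statement2_general 𝒯 a hs hhs y hy

end TopTheory

end Paper
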